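/- (Theorem 2.1, sufficiency) Let H be a complex Hilbert space and L, M closed linear subspaces with Q = L ∩ M. If c(L,M) < 1, then every continuous linear functional f on L that vanishes on Q admits a continuous linear extension f̃ on all of H such that f̃(x) = f(x) for x ∈ L, f̃(x) = 0 for x ∈ M, and ‖f̃‖_{H*} ≤ ‖f‖_{L*} / √(1 − c(L,M)²). -/

import Mathlib

open scoped InnerProductSpace Pointwise

/-- The inclination `c(L,M)` of two subspaces `L`, `M` of a complex Hilbert space:
the supremum of `|⟪u,v⟫| / (‖u‖‖v‖)` over nonzero `u ∈ L ⊖ Q` and nonzero `v ∈ M ⊖ Q`,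
where `Q = L ⊓ M` and `L ⊖ Q = L ⊓ Qᗮ`, `M ⊖ Q = M ⊓ Qᗮ`. -/
noncomputable def inclination {H : Type*} [NormedAddCommGroup H] [InnerProductSpace ℂ H]
    (L M : Submodule ℂ H) : ℝ :=
  sSup {r : ℝ | ∃ u ∈ L ⊓ (L ⊓ M)ᗮ, ∃ v ∈ M ⊓ (L ⊓ M)ᗮ,
    u ≠ 0 ∧ v ≠ 0 ∧ r = ‖⟪u, v⟫_ℂ‖ / (‖u‖ * ‖v‖)}

/-! Write `x ∈ L`, `y ∈ M` as `x = q + u`, `y = q' + v` with `q, q' ∈ Q = L ⊓ M` and `u, v ⊥ Q`.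
Since `f` vanishes on `Q`, `f x = f u`; projecting onto `Qᗮ` gives `‖u + v‖ ≤ ‖x + y‖`, and
`‖u + v‖² ≥ ‖u‖² - 2c‖u‖‖v‖ + ‖v‖² ≥ (1 - c²)‖u‖²`. Hence `x + y ↦ f x` is a well-defined
functional on `L + M` of norm at most `‖f‖ / √(1 - c²)`, and Hahn–Banach extends it to `H`. -/

section Extension

variable {𝕜 E : Type*} [RCLike 𝕜] [NormedAddCommGroup E] [NormedSpace 𝕜 E]

theorem exists_extension_eq_zero_of_norm_le_mul_norm_add (L M : Submodule 𝕜 E)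
    (f : L →L[𝕜] 𝕜) {C : ℝ} (hC : 0 ≤ C) (hf : ∀ (x : L) (y : M), ‖f x‖ ≤ C * ‖(x : E) + y‖) :
    ∃ g : E →L[𝕜] 𝕜, (∀ x : L, g x = f x) ∧ (∀ y ∈ M, g y = 0) ∧ ‖g‖ ≤ C := by
  set φ : (L × M) →ₗ[𝕜] E := L.subtype.coprod M.subtype
  set ψ : (L × M) →ₗ[𝕜] 𝕜 := (f : L →ₗ[𝕜] 𝕜) ∘ₗ LinearMap.fst 𝕜 L M
  have hker : LinearMap.ker φ ≤ LinearMap.ker ψ := by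
    rintro ⟨x, y⟩ hxy
    have := hf x y
    simp_all [φ, ψ]
  -- `ψ` factors through `φ`, giving the functional `x + y ↦ f x` on `range φ = L ⊔ M`
  set F : LinearMap.range φ →ₗ[𝕜] 𝕜 :=
    (LinearMap.ker φ).liftQ ψ hker ∘ₗ (φ.quotKerEquivRange.symm : _ →ₗ[𝕜] _)
  have hF : ∀ p, F (φ.rangeRestrict p) = ψ p := fun p => by
    have : φ.quotKerEquivRange.symm (φ.rangeRestrict p) = Submodule.Quotient.mk p :=
      (LinearEquiv.symm_apply_eq _).mpr rfl
    simp only [F, LinearMap.comp_apply, LinearEquiv.coe_coe, this, Submodule.liftQ_apply]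
  have hFbound : ∀ n, ‖F n‖ ≤ C * ‖n‖ := by
    rintro ⟨_, p, rfl⟩
    exact (hF p).symm ▸ hf p.1 p.2
  obtain ⟨g, hg, hgnorm⟩ := exists_extension_norm_eq _ (F.mkContinuous C hFbound)
  refine ⟨g, fun x => ?_, fun y hy => ?_, hgnorm ▸ LinearMap.mkContinuous_norm_le _ hC _⟩
  · simpa [φ, ψ] using (hg (φ.rangeRestrict (x, 0))).trans (hF (x, 0))
  · simpa [φ, ψ] using (hg (φ.rangeRestrict (0, ⟨y, hy⟩))).trans (hF (0, ⟨y, hy⟩))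

end Extension

theorem InnerProductSpace.sqrt_one_sub_sq_mul_norm_le_norm_add {𝕜 E : Type*} [RCLike 𝕜]
    [NormedAddCommGroup E] [InnerProductSpace 𝕜 E] {c : ℝ} {u v : E}
    (h : ‖⟪u, v⟫_𝕜‖ ≤ c * (‖u‖ * ‖v‖)) : √(1 - c ^ 2) * ‖u‖ ≤ ‖u + v‖ := by
  have hre := abs_le.mp ((RCLike.abs_re_le_norm _).trans h)
  have hsq : (1 - c ^ 2) * ‖u‖ ^ 2 ≤ ‖u + v‖ ^ 2 := by
    nlinarith [norm_add_sq (𝕜 := 𝕜) u v, sq_nonneg (c * ‖u‖ - ‖v‖)]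
  calc √(1 - c ^ 2) * ‖u‖ = √((1 - c ^ 2) * ‖u‖ ^ 2) := by
        rw [Real.sqrt_mul' _ (sq_nonneg _), Real.sqrt_sq (norm_nonneg _)]
    _ ≤ √(‖u + v‖ ^ 2) := Real.sqrt_le_sqrt hsq
    _ = ‖u + v‖ := Real.sqrt_sq (norm_nonneg _)

section Inclination

variable {H : Type*} [NormedAddCommGroup H] [InnerProductSpace ℂ H] (L M : Submodule ℂ H)

theorem inclination_nonneg : 0 ≤ inclination L M :=
  Real.sSup_nonneg <| by rintro r ⟨u, -, v, -, -, -, rfl⟩; positivity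

theorem norm_inner_le_inclination_mul {u v : H} (hu : u ∈ L ⊓ (L ⊓ M)ᗮ)
    (hv : v ∈ M ⊓ (L ⊓ M)ᗮ) : ‖⟪u, v⟫_ℂ‖ ≤ inclination L M * (‖u‖ * ‖v‖) := by
  rcases eq_or_ne u 0 with rfl | hu0
  · simp
  rcases eq_or_ne v 0 with rfl | hv0
  · simp
  have hbdd : BddAbove {r : ℝ | ∃ u ∈ L ⊓ (L ⊓ M)ᗮ, ∃ v ∈ M ⊓ (L ⊓ M)ᗮ,
      u ≠ 0 ∧ v ≠ 0 ∧ r = ‖⟪u, v⟫_ℂ‖ / (‖u‖ * ‖v‖)} := by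
    refine ⟨1, ?_⟩
    rintro r ⟨u, -, v, -, hu0, hv0, rfl⟩
    rw [div_le_one (by positivity)]
    exact norm_inner_le_norm u v
  rw [← div_le_iff₀ (by positivity)]
  exact le_csSup hbdd ⟨u, hu, v, hv, hu0, hv0, rfl⟩

variable [(L ⊓ M).HasOrthogonalProjection]

theorem sqrt_one_sub_inclination_sq_mul_norm_le {x y : H} (hx : x ∈ L) (hy : y ∈ M) :
    √(1 - inclination L M ^ 2) * ‖x - (L ⊓ M).starProjection x‖ ≤ ‖x + y‖ := by
  set P := (L ⊓ M).starProjection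
  have hPx : P x ∈ L ⊓ M := Submodule.starProjection_apply_mem _ _
  have hPy : P y ∈ L ⊓ M := Submodule.starProjection_apply_mem _ _
  have hu : x - P x ∈ L ⊓ (L ⊓ M)ᗮ :=
    ⟨L.sub_mem hx hPx.1, (L ⊓ M).sub_starProjection_mem_orthogonal x⟩
  have hv : y - P y ∈ M ⊓ (L ⊓ M)ᗮ :=
    ⟨M.sub_mem hy hPy.2, (L ⊓ M).sub_starProjection_mem_orthogonal y⟩
  have hproj : ‖(x - P x) + (y - P y)‖ ≤ ‖x + y‖ := by
    have : (x - P x) + (y - P y) = (L ⊓ M)ᗮ.starProjection (x + y) := by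
      rw [Submodule.starProjection_orthogonal, map_add]
      rfl
    exact this ▸ Submodule.norm_starProjection_apply_le _ _
  exact (InnerProductSpace.sqrt_one_sub_sq_mul_norm_le_norm_add
    (norm_inner_le_inclination_mul L M hu hv)).trans hproj

theorem norm_apply_le_div_sqrt_one_sub_inclination_sq (hc : inclination L M < 1)
    (f : L →L[ℂ] ℂ) (hf : ∀ x : L, (x : H) ∈ M → f x = 0) (x : L) (y : M) :
    ‖f x‖ ≤ ‖f‖ / √(1 - inclination L M ^ 2) * ‖(x : H) + y‖ := by
  set P := (L ⊓ M).starProjection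
  have hs : 0 < √(1 - inclination L M ^ 2) :=
    Real.sqrt_pos.mpr (by nlinarith [inclination_nonneg L M])
  have hPx : P x ∈ L ⊓ M := Submodule.starProjection_apply_mem _ _
  have hfx : f x = f ⟨x - P x, L.sub_mem x.2 hPx.1⟩ := by
    have hsplit : x = ⟨x - P x, L.sub_mem x.2 hPx.1⟩ + ⟨P x, hPx.1⟩ := by ext; simp
    conv_lhs => rw [hsplit, map_add, hf ⟨P x, hPx.1⟩ hPx.2, add_zero]
  rw [div_mul_eq_mul_div, le_div_iff₀ hs, hfx]
  calc ‖f ⟨x - P x, _⟩‖ * √(1 - inclination L M ^ 2)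
      ≤ ‖f‖ * ‖x - P x‖ * √(1 - inclination L M ^ 2) := by gcongr; exact f.le_opNorm _
    _ = ‖f‖ * (√(1 - inclination L M ^ 2) * ‖x - P x‖) := by ring
    _ ≤ ‖f‖ * ‖(x : H) + y‖ := by
        gcongr; exact sqrt_one_sub_inclination_sq_mul_norm_le L M x.2 y.2

end Inclination

theorem stmt_5_general {H : Type*} [NormedAddCommGroup H] [InnerProductSpace ℂ H] [CompleteSpace H]
    (L M : Submodule ℂ H) (hL : IsClosed (L : Set H)) (hM : IsClosed (M : Set H))
    (hc : inclination L M < 1)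
    (f : L →L[ℂ] ℂ) (hf : ∀ x : L, (x : H) ∈ M → f x = 0) :
    ∃ g : H →L[ℂ] ℂ, (∀ x : L, g (x : H) = f x) ∧ (∀ x ∈ M, g x = 0) ∧
      ‖g‖ ≤ ‖f‖ / Real.sqrt (1 - inclination L M ^ 2) := by
  have hQ : IsClosed ((L ⊓ M : Submodule ℂ H) : Set H) := by
    rw [Submodule.coe_inf]; exact hL.inter hM
  have : CompleteSpace (L ⊓ M : Submodule ℂ H) := hQ.completeSpace_coe
  exact exists_extension_eq_zero_of_norm_le_mul_norm_add L M f (by positivity)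
    (norm_apply_le_div_sqrt_one_sub_inclination_sq L M hc f hf)

theorem stmt_5 {H : Type*} [NormedAddCommGroup H] [InnerProductSpace ℂ H] [CompleteSpace H]
    (L M : Submodule ℂ H) (hL : IsClosed (L : Set H)) (hM : IsClosed (M : Set H))
    (hLQ : ∃ u ∈ L ⊓ (L ⊓ M)ᗮ, u ≠ 0) (hMQ : ∃ v ∈ M ⊓ (L ⊓ M)ᗮ, v ≠ 0)
    (hc : inclination L M < 1)
    (f : L →L[ℂ] ℂ) (hf : ∀ x : L, (x : H) ∈ M → f x = 0) :
    ∃ g : H →L[ℂ] ℂ, (∀ x : L, g (x : H) = f x) ∧ (∀ x ∈ M, g x = 0) ∧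
      ‖g‖ ≤ ‖f‖ / Real.sqrt (1 - inclination L M ^ 2) :=
  stmt_5_general L M hL hM hc f hf
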